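/- Let a > b be positive integers. Then the step count of the regular Euclidean algorithm on (a,b) (sum of all quotients plus number of divisions minus one) is less than or equal to the step count of any generalized Euclidean algorithm applied to (a,b). -/

import Mathlib

/-!
Measure the regular algorithm by `euclidCost a b`, the sum of its quotients plus its number of
divisions. Following a generalized algorithm division by division, `euclidCost a b` is at most
its step count plus one, with equality when all signs are `+`. A first division `a = b p + x`
is also the regular one. A first division `a = b p - x` replaces the regular division
`a = b (p - 1) + (b - x)`: it spends one more subtraction, and continuing from `(b, x)` instead of
`(b, b - x)` saves at most one step, since `euclidCost b (b - x) ≤ euclidCost b x + 1`.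
-/

/-- A generalized Euclidean algorithm on the pair `(a, b)`:
a sequence of equations `x (i-1) = x i * p i + ε (i+1) * x (i+1)` for `i = 1, …, m`,
with positive quotients `p i`, signs `ε i = ±1`, strictly decreasing positive
remainders, and final remainder `x (m+1) = 0`. -/
structure GenEuclid (a b : ℕ) where
  m : ℕ
  x : ℕ → ℕ
  p : ℕ → ℕ
  ε : ℕ → ℤ
  hm : 1 ≤ m
  hx0 : x 0 = a
  hx1 : x 1 = b
  hxm1 : x (m + 1) = 0
  hpos : ∀ i, i ≤ m → 0 < x i
  hdec : ∀ i, 1 ≤ i → i ≤ m → x (i + 1) < x i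
  hp : ∀ i, 1 ≤ i → i ≤ m → 1 ≤ p i
  hε : ∀ i, 2 ≤ i → i ≤ m → ε i = 1 ∨ ε i = -1
  heq : ∀ i, 1 ≤ i → i ≤ m → (x (i - 1) : ℤ) = x i * p i + ε (i + 1) * x (i + 1)

/-- The step count of a generalized Euclidean algorithm:
the sum of all quotients (total subtractions) plus the number of divisions minus one
(the swaps). -/
def GenEuclid.steps {a b : ℕ} (E : GenEuclid a b) : ℕ :=
  (E.m - 1) + ∑ i ∈ Finset.Icc 1 E.m, E.p i

/-- The regular Euclidean algorithm: all remainders are taken with sign `+1`. -/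
def GenEuclid.IsRegular {a b : ℕ} (E : GenEuclid a b) : Prop :=
  ∀ i, 2 ≤ i → i ≤ E.m → E.ε i = 1

/-- The method of least absolute remainders: at each division the remainder of least
absolute value is chosen, i.e. `2 * x (i+1) ≤ x i`, with ties (remainder exactly half
the divisor) broken in favor of the positive remainder. -/
def GenEuclid.IsLAR {a b : ℕ} (E : GenEuclid a b) : Prop :=
  ∀ i, 1 ≤ i → i ≤ E.m →
    2 * E.x (i + 1) ≤ E.x i ∧ (2 * E.x (i + 1) = E.x i → E.ε (i + 1) = 1)

/-- The method of least absolute remainders (no tie-breaking condition):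
at every step `2 * x (i+1) ≤ x i`. -/
def GenEuclid.IsLAR' {a b : ℕ} (E : GenEuclid a b) : Prop :=
  ∀ i, 1 ≤ i → i ≤ E.m → 2 * E.x (i + 1) ≤ E.x i

open Finset

/-- The sum of the quotients plus the number of divisions of the regular Euclidean algorithm on
`(a, b)`: one more than its step count, which avoids a truncated `- 1`. -/
def euclidCost (a b : ℕ) : ℕ :=
  if h : b = 0 then 0 else a / b + 1 + euclidCost b (a % b)
termination_by b
decreasing_by exact Nat.mod_lt _ (Nat.pos_of_ne_zero h)

@[simp]
lemma euclidCost_zero (a : ℕ) : euclidCost a 0 = 0 := by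
  rw [euclidCost, dif_pos rfl]

lemma euclidCost_mul_add {b r : ℕ} (q : ℕ) (hrb : r < b) :
    euclidCost (b * q + r) b = q + 1 + euclidCost b r := by
  have hb : 0 < b := by omega
  rw [euclidCost, dif_neg hb.ne', Nat.mul_add_div hb, Nat.div_eq_of_lt hrb, Nat.mul_add_mod,
    Nat.mod_eq_of_lt hrb, add_zero]

lemma euclidCost_add_self (a : ℕ) {b : ℕ} (hb : 0 < b) :
    euclidCost (a + b) b = euclidCost a b + 1 := by
  have hr := Nat.mod_lt a hb
  calc euclidCost (a + b) b = euclidCost (b * (a / b + 1) + a % b) b := by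
        rw [mul_add_one, add_right_comm, Nat.div_add_mod]
    _ = euclidCost (b * (a / b) + a % b) b + 1 := by
        rw [euclidCost_mul_add _ hr, euclidCost_mul_add _ hr]; ring
    _ = euclidCost a b + 1 := by rw [Nat.div_add_mod]

/-- If `c < d`, both sides reduce to `euclidCost d c`, plus one on the left and two on the right;
symmetrically, if `d < c` both reduce to `euclidCost c d`, plus two and one. -/
lemma euclidCost_add_le_complement_add_one {c d : ℕ} (hc : 0 < c) (hd : 0 < d) :
    euclidCost (c + d) c ≤ euclidCost (c + d) d + 1 := by
  rcases lt_trichotomy c d with hcd | rfl | hdc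
  · have hc' : euclidCost (c + d) c = euclidCost d c + 1 := by
      rw [add_comm]; exact euclidCost_add_self d hc
    have hd' : euclidCost (c + d) d = 1 + 1 + euclidCost d c := by
      rw [add_comm, ← euclidCost_mul_add 1 hcd, mul_one]
    omega
  · omega
  · have hc' : euclidCost (c + d) c = 1 + 1 + euclidCost c d := by
      rw [← euclidCost_mul_add 1 hdc, mul_one]
    have hd' : euclidCost (c + d) d = euclidCost c d + 1 := euclidCost_add_self c hd
    omega

lemma sum_Icc_one_succ {M : Type*} [AddCommMonoid M] (f : ℕ → M) (n : ℕ) :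
    ∑ i ∈ Icc 1 (n + 1), f i = f 1 + ∑ i ∈ Icc 1 n, f (i + 1) := by
  rw [← insert_Icc_succ_left_eq_Icc (by omega), sum_insert (by simp), Nat.succ_eq_succ,
    ← map_add_right_Icc 1 n 1, sum_map]
  rfl

namespace GenEuclid

variable {a b : ℕ}

def tail (E : GenEuclid a b) (h : 2 ≤ E.m) : GenEuclid b (E.x 2) where
  m := E.m - 1
  x i := E.x (i + 1)
  p i := E.p (i + 1)
  ε i := E.ε (i + 1)
  hm := by omega
  hx0 := E.hx1
  hx1 := rfl
  hxm1 := by rw [show E.m - 1 + 1 + 1 = E.m + 1 by omega]; exact E.hxm1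
  hpos i hi := E.hpos (i + 1) (by omega)
  hdec i h1 hi := E.hdec (i + 1) (by omega) (by omega)
  hp i h1 hi := E.hp (i + 1) (by omega) (by omega)
  hε i h1 hi := E.hε (i + 1) (by omega) (by omega)
  heq i h1 hi := by
    rw [show i - 1 + 1 = i + 1 - 1 by omega]
    exact E.heq (i + 1) (by omega) (by omega)

lemma steps_eq_add_tail (E : GenEuclid a b) (h : 2 ≤ E.m) :
    E.steps = E.p 1 + 1 + (E.tail h).steps := by
  obtain ⟨n, hn⟩ : ∃ n, E.m = n + 2 := ⟨E.m - 2, by omega⟩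
  simp only [steps, tail, hn, show n + 2 - 1 = n + 1 from rfl, sum_Icc_one_succ E.p (n + 1)]
  omega

lemma steps_of_m_eq_one (E : GenEuclid a b) (h : E.m = 1) : E.steps = E.p 1 := by
  simp [steps, h]

lemma IsRegular.tail {E : GenEuclid a b} (hR : E.IsRegular) (h : 2 ≤ E.m) :
    (E.tail h).IsRegular :=
  fun i hi him ↦ hR (i + 1) (by omega) (by simp only [GenEuclid.tail] at him; omega)

lemma b_pos (E : GenEuclid a b) : 0 < b := E.hx1 ▸ E.hpos 1 E.hm

lemma x_two_lt (E : GenEuclid a b) : E.x 2 < b := by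
  simpa [E.hx1] using E.hdec 1 le_rfl E.hm

lemma first_division (E : GenEuclid a b) : (a : ℤ) = b * E.p 1 + E.ε 2 * E.x 2 := by
  simpa [E.hx0, E.hx1] using E.heq 1 le_rfl E.hm

lemma eq_mul_of_m_eq_one (E : GenEuclid a b) (h : E.m = 1) : a = b * E.p 1 := by
  have hx2 : E.x 2 = 0 := by simpa [h] using E.hxm1
  exact_mod_cast (by simpa [hx2] using E.first_division : (a : ℤ) = b * E.p 1)

lemma euclidCost_eq_of_m_eq_one (E : GenEuclid a b) (h : E.m = 1) :
    euclidCost a b = E.steps + 1 := by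
  rw [E.steps_of_m_eq_one h, congrArg (euclidCost · b) (E.eq_mul_of_m_eq_one h),
    ← add_zero (b * _), euclidCost_mul_add _ E.b_pos, euclidCost_zero]

lemma euclidCost_eq_of_ε_two_eq_one (E : GenEuclid a b) (hε : E.ε 2 = 1) :
    euclidCost a b = E.p 1 + 1 + euclidCost b (E.x 2) := by
  have ha : a = b * E.p 1 + E.x 2 := by
    have hdiv := E.first_division
    rw [hε, one_mul] at hdiv
    exact_mod_cast hdiv
  rw [congrArg (euclidCost · b) ha, euclidCost_mul_add _ E.x_two_lt]

lemma euclidCost_le_of_ε_two_eq_neg_one (E : GenEuclid a b) (h2 : 2 ≤ E.m) (hε : E.ε 2 = -1) :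
    euclidCost a b ≤ E.p 1 + 1 + euclidCost b (E.x 2) := by
  have hx2 := E.x_two_lt
  have hx2pos : 0 < E.x 2 := E.hpos 2 h2
  obtain ⟨q, hq⟩ : ∃ q, E.p 1 = q + 1 := ⟨E.p 1 - 1, by have := E.hp 1 le_rfl E.hm; omega⟩
  have ha : a = b * q + (b - E.x 2) := by
    have hdiv := E.first_division
    rw [hε, hq] at hdiv
    push_cast at hdiv
    zify [hx2.le]
    linear_combination hdiv
  have hswap := euclidCost_add_le_complement_add_one (Nat.sub_pos_of_lt hx2) hx2pos
  rw [Nat.sub_add_cancel hx2.le] at hswap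
  rw [congrArg (euclidCost · b) ha, euclidCost_mul_add _ (Nat.sub_lt E.b_pos hx2pos), hq]
  omega

lemma euclidCost_le_steps_add_one (E : GenEuclid a b) : euclidCost a b ≤ E.steps + 1 := by
  induction b using Nat.strong_induction_on generalizing a with
  | _ b ih =>
  rcases E.hm.eq_or_lt with hm | hm
  · exact (E.euclidCost_eq_of_m_eq_one hm.symm).le
  · have htail := ih _ E.x_two_lt (E.tail hm)
    rw [E.steps_eq_add_tail hm]
    rcases E.hε 2 le_rfl hm with hε | hε
    · rw [E.euclidCost_eq_of_ε_two_eq_one hε]; omega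
    · have := E.euclidCost_le_of_ε_two_eq_neg_one hm hε; omega

lemma IsRegular.euclidCost_eq {E : GenEuclid a b} (hR : E.IsRegular) :
    euclidCost a b = E.steps + 1 := by
  induction b using Nat.strong_induction_on generalizing a with
  | _ b ih =>
  rcases E.hm.eq_or_lt with hm | hm
  · exact E.euclidCost_eq_of_m_eq_one hm.symm
  · rw [E.steps_eq_add_tail hm, E.euclidCost_eq_of_ε_two_eq_one (hR 2 le_rfl hm),
      ih _ E.x_two_lt (hR.tail hm)]
    ring

end GenEuclid

theorem regular_steps_min_general (a b : ℕ)
    (R E : GenEuclid a b) (hR : R.IsRegular) :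
    R.steps ≤ E.steps := by
  have h := E.euclidCost_le_steps_add_one
  rw [hR.euclidCost_eq] at h
  omega

/-- For positive integers `a > b`, the step count of the regular Euclidean algorithm
on `(a, b)` is at most the step count of any generalized Euclidean algorithm. -/
theorem regular_steps_min (a b : ℕ) (hb : 0 < b) (hba : b < a)
    (R E : GenEuclid a b) (hR : R.IsRegular) :
    R.steps ≤ E.steps :=
  regular_steps_min_general a b R E hR
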